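/- arXiv:0711.4218 — 3 statements merged into one kernel-verified Lean document; each statement's English description precedes it below -/
import Mathlib

section
/- Let $A_1,\dots,A_n$ be real numbers, $\lambda \in \mathbb{R}$ with $1+\lambda A_i > 0$ for every $i$, and suppose $\sum_{i=1}^n \frac{A_i}{1+\lambda A_i} = 0$. Let $w_i = \frac{1}{n(1+\lambda A_i)}$. Then for any weights $v_1,\dots,v_n \ge 0$ with $\sum_i v_i = 1$ and $\sum_i v_i A_i = 0$, one has $\prod_{i=1}^n (n v_i) \le \prod_{i=1}^n (n w_i)$. -/
/-!
Put `c i = 1 + λ A i`. The two constraints give `∑ v i * c i = 1`, and `n * w i = (c i)⁻¹`,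
so the claim is `∏ (n * (v i * c i)) ≤ 1`: the AM-GM inequality for the nonnegative numbers
`v i * c i`, whose arithmetic mean is `1 / n`.
-/

open Finset

theorem Real.prod_card_mul_le_sum_pow {ι : Type*} (s : Finset ι) (z : ι → ℝ)
    (hz : ∀ i ∈ s, 0 ≤ z i) : ∏ i ∈ s, (#s * z i) ≤ (∑ i ∈ s, z i) ^ #s := by
  rcases s.eq_empty_or_nonempty with rfl | hs
  · simp
  have hcard : (0 : ℝ) < #s := by exact_mod_cast hs.card_pos
  have amgm : ∏ i ∈ s, z i ^ (#s : ℝ)⁻¹ ≤ ∑ i ∈ s, (#s : ℝ)⁻¹ * z i :=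
    Real.geom_mean_le_arith_mean_weighted s _ z (fun _ _ => by positivity)
      (by simp [hcard.ne']) hz
  calc ∏ i ∈ s, (#s * z i) = (#s : ℝ) ^ #s * (∏ i ∈ s, z i ^ (#s : ℝ)⁻¹) ^ #s := by
        rw [prod_mul_distrib, prod_const, ← prod_pow]
        congr 1
        exact prod_congr rfl fun i hi => (Real.rpow_inv_natCast_pow (hz i hi) hs.card_pos.ne').symm
    _ ≤ (#s : ℝ) ^ #s * (∑ i ∈ s, (#s : ℝ)⁻¹ * z i) ^ #s := by
        gcongr
        exact prod_nonneg fun i hi => Real.rpow_nonneg (hz i hi) _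
    _ = (∑ i ∈ s, z i) ^ #s := by
        rw [← mul_sum, ← mul_pow, mul_inv_cancel_left₀ hcard.ne']

theorem prod_card_mul_le_prod_inv_of_sum_mul_eq_one {ι : Type*} [Fintype ι] {c v : ι → ℝ}
    (hc : ∀ i, 0 < c i) (hv : ∀ i, 0 ≤ v i) (hvc : ∑ i, v i * c i = 1) :
    ∏ i, (Fintype.card ι * v i) ≤ ∏ i, (c i)⁻¹ := by
  have hsplit : ∏ i, (Fintype.card ι * v i) =
      (∏ i, (Fintype.card ι * (v i * c i))) * ∏ i, (c i)⁻¹ := by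
    rw [← prod_mul_distrib]
    exact prod_congr rfl fun i _ => by field_simp [(hc i).ne']
  have hamgm : ∏ i, (Fintype.card ι * (v i * c i)) ≤ 1 := by
    simpa [hvc] using Real.prod_card_mul_le_sum_pow univ (fun i => v i * c i)
      fun i _ => mul_nonneg (hv i) (hc i).le
  rw [hsplit]
  exact mul_le_of_le_one_left (prod_nonneg fun i _ => (inv_pos.2 (hc i)).le) hamgm

theorem stmt_3_general (n : ℕ) (A : Fin n → ℝ) (lam : ℝ)
    (hpos : ∀ i, 0 < 1 + lam * A i)
    (v : Fin n → ℝ) (hv : ∀ i, 0 ≤ v i) (hv1 : ∑ i, v i = 1)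
    (hvA : ∑ i, v i * A i = 0) :
    ∏ i, ((n : ℝ) * v i) ≤ ∏ i, ((n : ℝ) * (1 / ((n : ℝ) * (1 + lam * A i)))) := by
  have hn : (n : ℝ) ≠ 0 := by
    rintro hn
    obtain rfl : n = 0 := by exact_mod_cast hn
    simp at hv1
  have hvc : ∑ i, v i * (1 + lam * A i) = 1 := by
    simp only [mul_add, mul_one, sum_add_distrib, hv1, mul_left_comm (v _) lam, ← mul_sum, hvA,
      mul_zero, add_zero]
  have hw (i : Fin n) : (n : ℝ) * (1 / ((n : ℝ) * (1 + lam * A i))) = (1 + lam * A i)⁻¹ := by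
    field_simp
  simpa only [hw, Fintype.card_fin] using prod_card_mul_le_prod_inv_of_sum_mul_eq_one hpos hv hvc

/-- The Lagrange-multiplier weights `w i = 1/(n(1+λ A i))` maximize the empirical
likelihood `∏ i, n * v i` over the constraint set. -/
theorem stmt_3 (n : ℕ) (A : Fin n → ℝ) (lam : ℝ)
    (hpos : ∀ i, 0 < 1 + lam * A i)
    (heq : ∑ i, A i / (1 + lam * A i) = 0)
    (v : Fin n → ℝ) (hv : ∀ i, 0 ≤ v i) (hv1 : ∑ i, v i = 1)
    (hvA : ∑ i, v i * A i = 0) :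
    ∏ i, ((n : ℝ) * v i) ≤ ∏ i, ((n : ℝ) * (1 / ((n : ℝ) * (1 + lam * A i)))) :=
  stmt_3_general n A lam hpos v hv hv1 hvA
end

section
/- Let $A_1,\dots,A_n$ be real numbers, not all zero, and $\lambda \in \mathbb{R}$ with $1+\lambda A_i > 0$ for all $i$, satisfying $\sum_{i=1}^n \frac{A_i}{1+\lambda A_i} = 0$ and $\sum_{i=1}^n \frac{1}{1+\lambda A_i} = n$. Then $\sqrt{n}\,|\lambda| \ge \frac{\left| n^{-1}\sum_{i=1}^n A_i \right|}{n^{-1/2} \max_{1\le i \le n} A_i^2}$, provided $\max_i A_i^2 > 0$. -/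
/-!
Writing `A i = A i / (1 + λ A i) + λ A i ^ 2 / (1 + λ A i)` and summing, the first constraint
kills the first sum, so `∑ A i = λ ∑ A i ^ 2 / (1 + λ A i)`. Bounding `A i ^ 2` by its maximum
and using the second constraint `∑ 1 / (1 + λ A i) = n` gives `|∑ A i| ≤ |λ| n max A i ^ 2`,
which is the claim after rescaling.
-/

open Finset

section LagrangeMultiplier

variable {ι : Type*} {s : Finset ι} {A : ι → ℝ} {lam : ℝ}

lemma sum_eq_mul_sum_sq_div_of_sum_div_eq_zero (hne : ∀ i ∈ s, 1 + lam * A i ≠ 0)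
    (heq : ∑ i ∈ s, A i / (1 + lam * A i) = 0) :
    ∑ i ∈ s, A i = lam * ∑ i ∈ s, A i ^ 2 / (1 + lam * A i) := by
  have hsplit : ∀ i ∈ s,
      A i = A i / (1 + lam * A i) + lam * (A i ^ 2 / (1 + lam * A i)) := fun i hi => by
    rw [mul_div_assoc', ← add_div, eq_div_iff (hne i hi)]
    ring
  rw [sum_congr rfl hsplit, sum_add_distrib, heq, zero_add, mul_sum]

lemma abs_sum_le_of_sum_div_eq_zero {M : ℝ} (hpos : ∀ i ∈ s, 0 < 1 + lam * A i)
    (heq : ∑ i ∈ s, A i / (1 + lam * A i) = 0) (hM : ∀ i ∈ s, A i ^ 2 ≤ M) :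
    |∑ i ∈ s, A i| ≤ |lam| * (M * ∑ i ∈ s, 1 / (1 + lam * A i)) := by
  have hweighted : ∑ i ∈ s, A i ^ 2 / (1 + lam * A i) ≤ M * ∑ i ∈ s, 1 / (1 + lam * A i) := by
    rw [mul_sum]
    refine sum_le_sum fun i hi => ?_
    rw [mul_one_div]
    exact div_le_div_of_nonneg_right (hM i hi) (hpos i hi).le
  have hnonneg : 0 ≤ ∑ i ∈ s, A i ^ 2 / (1 + lam * A i) :=
    sum_nonneg fun i hi => div_nonneg (sq_nonneg _) (hpos i hi).le
  rw [sum_eq_mul_sum_sq_div_of_sum_div_eq_zero (fun i hi => (hpos i hi).ne') heq, abs_mul,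
    abs_of_nonneg hnonneg]
  gcongr

end LagrangeMultiplier

theorem stmt_5_general (n : ℕ) (hn : 0 < n) (A : Fin n → ℝ) (lam : ℝ)
    (hpos : ∀ i, 0 < 1 + lam * A i)
    (heq : ∑ i, A i / (1 + lam * A i) = 0)
    (hsum : ∑ i, 1 / (1 + lam * A i) = (n : ℝ)) :
    Real.sqrt n * |lam| ≥
      |(n : ℝ)⁻¹ * ∑ i, A i| /
        ((Real.sqrt n)⁻¹ *
          (univ.sup' (univ_nonempty_iff.mpr (Fin.pos_iff_nonempty.mp hn))
            fun i => (A i) ^ 2)) := by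
  set M := univ.sup' (univ_nonempty_iff.mpr (Fin.pos_iff_nonempty.mp hn)) fun i => (A i) ^ 2
  have hnR : (0 : ℝ) < n := by exact_mod_cast hn
  have hM : 0 ≤ M := (sq_nonneg (A ⟨0, hn⟩)).trans (le_sup' (fun i => (A i) ^ 2) (mem_univ _))
  have hbound : |∑ i, A i| ≤ |lam| * (M * n) := hsum ▸
    abs_sum_le_of_sum_div_eq_zero (fun i _ => hpos i) heq fun i _ => le_sup' (fun i => (A i) ^ 2) (mem_univ i)
  refine div_le_of_le_mul₀ (by positivity) (by positivity) ?_
  calc |(n : ℝ)⁻¹ * ∑ i, A i| = (n : ℝ)⁻¹ * |∑ i, A i| := by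
        rw [abs_mul, abs_inv, Nat.abs_cast]
    _ ≤ (n : ℝ)⁻¹ * (|lam| * (M * n)) := by gcongr
    _ = Real.sqrt n * |lam| * ((Real.sqrt n)⁻¹ * M) := by
        field_simp

/-- Lower bound on the Lagrange multiplier used in the consistency proof
(Theorem 2.1(b)):
`√n |λ| ≥ |n⁻¹ ∑ A i| / (n^{-1/2} max_i (A i)²)`. -/
theorem stmt_5 (n : ℕ) (hn : 0 < n) (A : Fin n → ℝ) (lam : ℝ)
    (hA : ∃ i, A i ≠ 0)
    (hpos : ∀ i, 0 < 1 + lam * A i)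
    (heq : ∑ i, A i / (1 + lam * A i) = 0)
    (hsum : ∑ i, 1 / (1 + lam * A i) = (n : ℝ))
    (hmax : 0 < (univ.sup' (univ_nonempty_iff.mpr (Fin.pos_iff_nonempty.mp hn))
      fun i => (A i) ^ 2)) :
    Real.sqrt n * |lam| ≥
      |(n : ℝ)⁻¹ * ∑ i, A i| /
        ((Real.sqrt n)⁻¹ *
          (univ.sup' (univ_nonempty_iff.mpr (Fin.pos_iff_nonempty.mp hn))
            fun i => (A i) ^ 2)) :=
  stmt_5_general n hn A lam hpos heq hsum
end

section
/- Let $A_1,\dots,A_n$ be real numbers and $\lambda \in \mathbb{R}$ with $1+\lambda A_i > 0$ for all $i$ and $\sum_{i=1}^n \frac{A_i}{1+\lambda A_i} = 0$. Set $\ell = 2\sum_{i=1}^n \log(1+\lambda A_i)$. Then $\ell \ge \frac{n^{-1}\sum_{i=1}^n A_i^2}{2(n\lambda^2)^{-1} + 2\, n^{-1}\max_{1\le i\le n} A_i^2}$, provided $\lambda \neq 0$. -/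
/-!
With `t = λ A_i`, the multiplier equation says `∑ 2t/(1+t) = 0`, so `ℓ` is the sum of the
second-order remainders `2 log(1+t) - 2t/(1+t)`. Each remainder is at least `t²/(2+2t²)`: the
difference has derivative `t · (2/(1+t)² - 1/(1+t²)²)`, which changes sign only at `t = 0`
because `(1+t)² ≤ 2(1+t²)²`. Finally `t² ≤ λ² max_i A_i²` in the denominators.
-/

open Finset Set Real

lemma one_div_sq_le_two_div_sq {x : ℝ} (hx : 1 + x ≠ 0) :
    1 / (1 + x ^ 2) ^ 2 ≤ 2 / (1 + x) ^ 2 := by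
  rw [div_le_div_iff₀ (by positivity) (by positivity)]
  nlinarith [sq_nonneg (1 - x), sq_nonneg x, sq_nonneg (x ^ 2 + x)]

lemma hasDerivAt_two_log_one_add_sub {x : ℝ} (hx : 1 + x ≠ 0) :
    HasDerivAt (fun t => 2 * log (1 + t) - 2 * t / (1 + t) - t ^ 2 / (2 + 2 * t ^ 2))
      (x * (2 / (1 + x) ^ 2 - 1 / (1 + x ^ 2) ^ 2)) x := by
  have hlin : HasDerivAt (fun t : ℝ => 1 + t) 1 x := (hasDerivAt_id x).const_add 1
  have hsq : HasDerivAt (fun t : ℝ => t ^ 2) (2 * x) x := by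
    simpa using hasDerivAt_pow 2 x
  have hden : (2 : ℝ) + 2 * x ^ 2 ≠ 0 := by positivity
  refine ((((hlin.log hx).const_mul 2).sub (((hasDerivAt_id' x).const_mul 2).div hlin hx)).sub
    (hsq.div ((hsq.const_mul 2).const_add 2) hden)).congr_deriv ?_
  field_simp
  ring

lemma sq_div_le_two_log_one_add_sub {t : ℝ} (ht : -1 < t) :
    t ^ 2 / (2 + 2 * t ^ 2) ≤ 2 * log (1 + t) - 2 * t / (1 + t) := by
  set f : ℝ → ℝ := fun t => 2 * log (1 + t) - 2 * t / (1 + t) - t ^ 2 / (2 + 2 * t ^ 2)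
  have hf : ∀ x ∈ Ioi (-1 : ℝ), HasDerivAt f (x * (2 / (1 + x) ^ 2 - 1 / (1 + x ^ 2) ^ 2)) x :=
    fun x hx => hasDerivAt_two_log_one_add_sub (by linarith [mem_Ioi.1 hx])
  have hbracket : ∀ x ∈ Ioi (-1 : ℝ), 0 ≤ 2 / (1 + x) ^ 2 - 1 / (1 + x ^ 2) ^ 2 :=
    fun x hx => sub_nonneg.2 (one_div_sq_le_two_div_sq (by linarith [mem_Ioi.1 hx]))
  have hdiff : ∀ s ⊆ Ioi (-1 : ℝ), DifferentiableOn ℝ f s :=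
    fun s hs x hx => (hf x (hs hx)).differentiableAt.differentiableWithinAt
  have hmin : IsMinOn f (Ioi (-1)) 0 := by
    refine isMinOn_Ioi_of_deriv (hf 0 (by norm_num)).continuousAt
      (hdiff _ Ioo_subset_Ioi_self) (hdiff _ (Ioi_subset_Ioi (by norm_num))) ?_ ?_
    · intro x hx
      rw [(hf x hx.1).deriv]
      exact mul_nonpos_of_nonpos_of_nonneg hx.2.le (hbracket x hx.1)
    · intro x hx
      have hx' : x ∈ Ioi (-1 : ℝ) := mem_Ioi.2 (by linarith [mem_Ioi.1 hx])
      rw [(hf x hx').deriv]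
      exact mul_nonneg (mem_Ioi.1 hx).le (hbracket x hx')
  have := hmin (mem_Ioi.2 ht)
  norm_num [f] at this
  linarith

lemma sq_mul_sum_sq_div_le_two_sum_log {ι : Type*} (s : Finset ι) (A : ι → ℝ) {lam M : ℝ}
    (hpos : ∀ i ∈ s, 0 < 1 + lam * A i) (heq : ∑ i ∈ s, A i / (1 + lam * A i) = 0)
    (hM : ∀ i ∈ s, A i ^ 2 ≤ M) :
    lam ^ 2 * ∑ i ∈ s, A i ^ 2 / (2 + 2 * lam ^ 2 * M) ≤
      2 * ∑ i ∈ s, log (1 + lam * A i) := by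
  calc lam ^ 2 * ∑ i ∈ s, A i ^ 2 / (2 + 2 * lam ^ 2 * M)
      = ∑ i ∈ s, (lam * A i) ^ 2 / (2 + 2 * lam ^ 2 * M) := by
        rw [mul_sum]
        exact sum_congr rfl fun i _ => by ring
    _ ≤ ∑ i ∈ s, (lam * A i) ^ 2 / (2 + 2 * (lam * A i) ^ 2) := by
        refine sum_le_sum fun i hi => div_le_div_of_nonneg_left (sq_nonneg _) (by positivity) ?_
        have := mul_le_mul_of_nonneg_left (hM i hi) (sq_nonneg lam)
        rw [mul_pow]
        linarith
    _ ≤ ∑ i ∈ s, (2 * log (1 + lam * A i) - 2 * (lam * A i) / (1 + lam * A i)) :=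
        sum_le_sum fun i hi => sq_div_le_two_log_one_add_sub (by linarith [hpos i hi])
    _ = 2 * ∑ i ∈ s, log (1 + lam * A i) - 2 * lam * ∑ i ∈ s, A i / (1 + lam * A i) := by
        rw [sum_sub_distrib, mul_sum, mul_sum]
        congr 1
        exact sum_congr rfl fun i _ => by ring
    _ = 2 * ∑ i ∈ s, log (1 + lam * A i) := by rw [heq, mul_zero, sub_zero]

/-- Lower bound on the empirical log-likelihood ratio statistic used to prove
consistency against fixed alternatives (Theorem 2.1(b)). -/
theorem stmt_7 (n : ℕ) (hn : 0 < n) (A : Fin n → ℝ) (lam : ℝ) (hlam : lam ≠ 0)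
    (hpos : ∀ i, 0 < 1 + lam * A i)
    (heq : ∑ i, A i / (1 + lam * A i) = 0) :
    2 * ∑ i, Real.log (1 + lam * A i) ≥
      ((n : ℝ)⁻¹ * ∑ i, (A i) ^ 2) /
        (2 * ((n : ℝ) * lam ^ 2)⁻¹ +
          2 * (n : ℝ)⁻¹ *
            (univ.sup' (univ_nonempty_iff.mpr (Fin.pos_iff_nonempty.mp hn))
              fun i => (A i) ^ 2)) := by
  set M := univ.sup' (univ_nonempty_iff.mpr (Fin.pos_iff_nonempty.mp hn)) fun i => A i ^ 2
  have hM : ∀ i ∈ Finset.univ, A i ^ 2 ≤ M := fun i hi => le_sup' (fun j => A j ^ 2) hi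
  have hrhs : ((n : ℝ)⁻¹ * ∑ i, A i ^ 2) / (2 * ((n : ℝ) * lam ^ 2)⁻¹ + 2 * (n : ℝ)⁻¹ * M) =
      lam ^ 2 * ∑ i, A i ^ 2 / (2 + 2 * lam ^ 2 * M) := by
    rw [← sum_div]
    field_simp
  rw [ge_iff_le, hrhs]
  exact sq_mul_sum_sq_div_le_two_sum_log univ A (fun i _ => hpos i) heq hM
end
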